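/- Mutual knowledge along one exhaustive word suffices for common knowledge of positive formulas: For any nonempty G ⊆ N, any φ ∈ L⁺, and any state (V,M), (V,M) ⊨ C_G φ iff there exists a word w over G with set of letters exactly G such that (V,M) ⊨ K_w φ. -/

import Mathlib

structure Msg (P A : Type) where
  sender : P
  grp : Set P
  fact : A

inductive Form (P A : Type) where
  | atom : A → Form P A
  | neg  : Form P A → Form P A
  | and  : Form P A → Form P A → Form P A
  | or   : Form P A → Form P A → Form P A
  | ck   : Set P → Form P A → Form P A

/-- The negation-free (positive) fragment L⁺. -/
def Positive {P A : Type} : Form P A → Prop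
  | .atom _ => True
  | .neg _ => False
  | .and φ ψ => Positive φ ∧ Positive ψ
  | .or φ ψ => Positive φ ∧ Positive ψ
  | .ck _ φ => Positive φ

/-- Atoms occurring in a formula. -/
def FactsF {P A : Type} : Form P A → Set A
  | .atom p => {p}
  | .neg φ => FactsF φ
  | .and φ ψ => FactsF φ ∪ FactsF ψ
  | .or φ ψ => FactsF φ ∪ FactsF ψ
  | .ck _ φ => FactsF φ

/-- Facts occurring in a set of messages. -/
def Facts {P A : Type} (M : Set (Msg P A)) : Set A := {p | ∃ m ∈ M, m.fact = p}

/-- A state in the telling setting: messages (i,A,p) with i ∈ A, p ∈ At_i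
    (ownership given by `owner`), and Facts(M) ⊆ V. -/
def TState {P A : Type} (owner : A → P) (V : Set A) (M : Set (Msg P A)) : Prop :=
  ∀ m ∈ M, m.sender ∈ m.grp ∧ owner m.fact = m.sender ∧ m.fact ∈ V

/-- All messages are H-compliant. -/
def HComp {P A : Type} (H : Set (Set P)) (M : Set (Msg P A)) : Prop :=
  ∀ m ∈ M, m.grp ∈ H

/-- Indistinguishability for player i: equality of (V_i, M_i). -/
def indist {P A : Type} (owner : A → P) (i : P)
    (s t : Set A × Set (Msg P A)) : Prop :=
  {p ∈ s.1 | owner p = i} = {p ∈ t.1 | owner p = i} ∧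
  {m ∈ s.2 | i ∈ m.grp} = {m ∈ t.2 | i ∈ m.grp}

/-- ∼_G: transitive closure of the union of the ∼_i, i ∈ G. -/
def reach {P A : Type} (owner : A → P) (G : Set P) :
    Set A × Set (Msg P A) → Set A × Set (Msg P A) → Prop :=
  Relation.TransGen (fun s t => ∃ i ∈ G, indist owner i s t)

/-- Semantics ⊨_H (telling setting): C_G quantifies over H-compliant telling states. -/
def sat {P A : Type} (owner : A → P) (H : Set (Set P)) :
    Form P A → Set A → Set (Msg P A) → Prop
  | .atom p, V, _ => p ∈ V
  | .neg φ, V, M => ¬ sat owner H φ V M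
  | .and φ ψ, V, M => sat owner H φ V M ∧ sat owner H ψ V M
  | .or φ ψ, V, M => sat owner H φ V M ∨ sat owner H ψ V M
  | .ck G φ, V, M => ∀ V' M', TState owner V' M' → HComp H M' →
      reach owner G (V, M) (V', M') → sat owner H φ V' M'

/-- The complete hypergraph: all nonempty subsets of players. -/
def completeH (P : Type) : Set (Set P) := {B | B.Nonempty}

/-- Iterated knowledge K_{i₁}…K_{i_k} φ along a word. -/
def Kw {P A : Type} (w : List P) (φ : Form P A) : Form P A :=
  w.foldr (fun i ψ => Form.ck {i} ψ) φ

/-!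
The messages addressed to a group containing `G`, their facts, and the facts owned by every
member of `G` form the shared state of `G`. No `∼_i` step with `i ∈ G` changes it, so it is
contained in every telling state `∼_G`-reachable from `(V, M)`; and it is itself reachable, by
one `∼_i` step for each letter `i` of a word with letter set `G`, since stripping for `i` and
then for `j` is stripping for `{i, j}`. A positive formula is monotone in the state, so `C_G φ`
and `K_w φ`, for any such word `w`, both amount to `φ` holding in the shared state of `G`.
-/

variable {P A : Type} {owner : A → P}

def sharedState (owner : A → P) (G : Set P) (s : Set A × Set (Msg P A)) :
    Set A × Set (Msg P A) :=
  (Facts {m ∈ s.2 | G ⊆ m.grp} ∪ {p ∈ s.1 | ∀ i ∈ G, owner p = i}, {m ∈ s.2 | G ⊆ m.grp})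

theorem facts_mono {M M' : Set (Msg P A)} (h : M ⊆ M') : Facts M ⊆ Facts M' :=
  Set.image_mono h

theorem TState.facts_subset {V : Set A} {M : Set (Msg P A)} (h : TState owner V M) :
    Facts M ⊆ V := by
  rintro _ ⟨m, hm, rfl⟩
  exact (h m hm).2.2

theorem TState.hComp_completeH {V : Set A} {M : Set (Msg P A)} (h : TState owner V M) :
    HComp (completeH P) M :=
  fun m hm => ⟨m.sender, (h m hm).1⟩

theorem TState.subset_grp_of_forall_owner {V : Set A} {M : Set (Msg P A)}
    (h : TState owner V M) {m : Msg P A} (hm : m ∈ M) {S : Set P}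
    (hS : ∀ i ∈ S, owner m.fact = i) : S ⊆ m.grp := by
  intro i hi
  rw [← hS i hi, (h m hm).2.1]
  exact (h m hm).1

theorem setOf_mem_nil : {x | x ∈ ([] : List P)} = ∅ :=
  Set.ext fun _ => List.mem_nil_iff _

theorem setOf_mem_cons (i : P) (w : List P) : {x | x ∈ i :: w} = {x | x ∈ w} ∪ {i} :=
  Set.ext fun _ => List.mem_cons.trans or_comm

theorem sep_eq_sep_of_imp {α : Type*} {a b : Set α} {q r : α → Prop}
    (h : {x ∈ a | q x} = {x ∈ b | q x}) (hrq : ∀ x, r x → q x) :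
    {x ∈ a | r x} = {x ∈ b | r x} := by
  have hsep (c : Set α) : {x ∈ c | r x} = {x ∈ {x ∈ c | q x} | r x} :=
    Set.ext fun x => ⟨fun hx => ⟨⟨hx.1, hrq x hx.2⟩, hx.2⟩, fun hx => ⟨hx.1.1, hx.2⟩⟩
  rw [hsep a, hsep b, h]

section sharedState

variable {s t : Set A × Set (Msg P A)}

theorem tState_sharedState (h : TState owner s.1 s.2) (G : Set P) :
    TState owner (sharedState owner G s).1 (sharedState owner G s).2 :=
  fun m hm => ⟨(h m hm.1).1, (h m hm.1).2.1, Or.inl ⟨m, hm, rfl⟩⟩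

theorem sharedState_le (h : TState owner s.1 s.2) (G : Set P) : sharedState owner G s ≤ s :=
  ⟨Set.union_subset ((facts_mono (Set.sep_subset _ _)).trans h.facts_subset)
    (Set.sep_subset _ _), Set.sep_subset _ _⟩

theorem sharedState_mono (G : Set P) : Monotone (sharedState (owner := owner) G) :=
  fun _ _ hst => ⟨Set.union_subset_union (facts_mono fun _ hm => ⟨hst.2 hm.1, hm.2⟩)
    fun _ hp => ⟨hst.1 hp.1, hp.2⟩, fun _ hm => ⟨hst.2 hm.1, hm.2⟩⟩

theorem TState.sharedState_empty (h : TState owner s.1 s.2) : sharedState owner ∅ s = s :=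
  le_antisymm (sharedState_le h ∅)
    ⟨fun _ hp => Or.inr ⟨hp, fun _ hi => hi.elim⟩, fun _ hm => ⟨hm, Set.empty_subset _⟩⟩

theorem TState.sharedState_sharedState (h : TState owner s.1 s.2) (S T : Set P) :
    sharedState owner S (sharedState owner T s) = sharedState owner (S ∪ T) s := by
  have hM : {m ∈ {m ∈ s.2 | T ⊆ m.grp} | S ⊆ m.grp} = {m ∈ s.2 | S ∪ T ⊆ m.grp} := by
    ext m
    simp only [Set.mem_ofPred_eq, Set.union_subset_iff]
    tauto
  refine Prod.ext ?_ hM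
  simp only [sharedState, hM]
  ext p
  simp only [Set.mem_union, Set.mem_ofPred_eq]
  constructor
  · rintro (hF | ⟨⟨m, ⟨hm, hT⟩, rfl⟩ | ⟨hp, hT⟩, hS⟩)
    · exact Or.inl hF
    · exact Or.inl ⟨m, ⟨hm, Set.union_subset (h.subset_grp_of_forall_owner hm hS) hT⟩, rfl⟩
    · exact Or.inr ⟨hp, fun i hi => hi.elim (hS i) (hT i)⟩
  · rintro (hF | ⟨hp, hST⟩)
    · exact Or.inl hF
    · exact Or.inr ⟨Or.inr ⟨hp, fun i hi => hST i (Or.inr hi)⟩, fun i hi => hST i (Or.inl hi)⟩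

theorem indist_sharedState_singleton (h : TState owner s.1 s.2) (i : P) :
    indist owner i s (sharedState owner {i} s) := by
  constructor
  · ext p
    simp only [sharedState, Set.mem_ofPred_eq, Set.mem_union, Set.mem_singleton_iff,
      forall_eq]
    constructor
    · rintro ⟨hp, rfl⟩
      exact ⟨Or.inr ⟨hp, rfl⟩, rfl⟩
    · rintro ⟨hF | ⟨hp, -⟩, rfl⟩
      exacts [⟨h.facts_subset (facts_mono (Set.sep_subset _ _) hF), rfl⟩, ⟨hp, rfl⟩]
  · ext m
    simp only [sharedState, Set.mem_ofPred_eq, Set.singleton_subset_iff]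
    tauto

theorem indist.sharedState_eq {i : P} (h : indist owner i s t) {G : Set P} (hi : i ∈ G) :
    sharedState owner G s = sharedState owner G t := by
  have hM := sep_eq_sep_of_imp h.2 fun _ (hG : G ⊆ _) => hG hi
  have hV := sep_eq_sep_of_imp h.1 fun _ (hG : ∀ j ∈ G, _) => hG i hi
  simp only [sharedState, hM, hV]

theorem reach.nonempty {G : Set P} (h : reach owner G s t) : G.Nonempty := by
  cases h with
  | single h => exact h.imp fun _ hi => hi.1
  | tail _ h => exact h.imp fun _ hi => hi.1

theorem reach.sharedState_eq {G : Set P} (h : reach owner G s t) :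
    sharedState owner G s = sharedState owner G t := by
  induction h with
  | single h => obtain ⟨i, hi, h⟩ := h; exact h.sharedState_eq hi
  | tail _ h ih => obtain ⟨i, hi, h⟩ := h; exact ih.trans (h.sharedState_eq hi)

theorem sharedState_le_of_reach {G : Set P} (ht : TState owner t.1 t.2)
    (h : reach owner G s t) : sharedState owner G s ≤ t :=
  h.sharedState_eq ▸ sharedState_le ht G

theorem reach_sharedState_word (h : TState owner s.1 s.2) {G : Set P} (hG : G.Nonempty)
    (w : List P) (hw : ∀ i ∈ w, i ∈ G) : reach owner G s (sharedState owner {x | x ∈ w} s) := by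
  induction w generalizing s with
  | nil =>
    obtain ⟨i, hi⟩ := hG
    rw [setOf_mem_nil, h.sharedState_empty]
    exact .single ⟨i, hi, ⟨rfl, rfl⟩⟩
  | cons i w ih =>
    have hstep : reach owner G s (sharedState owner {i} s) :=
      .single ⟨i, hw i List.mem_cons_self, indist_sharedState_singleton h i⟩
    have hrest := ih (tState_sharedState h {i}) fun j hj => hw j (List.mem_cons_of_mem i hj)
    rw [h.sharedState_sharedState, ← setOf_mem_cons] at hrest
    exact hstep.trans hrest

theorem exists_list_setOf_mem_eq [Finite P] (G : Set P) : ∃ w : List P, {x | x ∈ w} = G := by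
  obtain ⟨s, rfl⟩ := (Set.toFinite G).exists_finset_coe
  exact ⟨s.toList, Set.ext fun _ => Finset.mem_toList⟩

theorem reach_sharedState [Finite P] (h : TState owner s.1 s.2) {G : Set P} (hG : G.Nonempty) :
    reach owner G s (sharedState owner G s) := by
  obtain ⟨w, rfl⟩ := exists_list_setOf_mem_eq G
  exact reach_sharedState_word h hG w fun _ => id

theorem sat_sharedState_of_sat_ck [Finite P] (h : TState owner s.1 s.2) {G : Set P}
    (hG : G.Nonempty) {ψ : Form P A} (hψ : sat owner (completeH P) (.ck G ψ) s.1 s.2) :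
    sat owner (completeH P) ψ (sharedState owner G s).1 (sharedState owner G s).2 :=
  hψ _ _ (tState_sharedState h G) (tState_sharedState h G).hComp_completeH
    (reach_sharedState h hG)

theorem sat_mono [Finite P] {φ : Form P A} (hφ : Positive φ) (hs : TState owner s.1 s.2)
    (ht : TState owner t.1 t.2) (hst : s ≤ t) (h : sat owner (completeH P) φ s.1 s.2) :
    sat owner (completeH P) φ t.1 t.2 := by
  induction φ generalizing s t with
  | atom p => exact hst.1 h
  | neg ψ => exact hφ.elim
  | and ψ χ ihψ ihχ => exact ⟨ihψ hφ.1 hs ht hst h.1, ihχ hφ.2 hs ht hst h.2⟩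
  | or ψ χ ihψ ihχ => exact h.imp (ihψ hφ.1 hs ht hst) (ihχ hφ.2 hs ht hst)
  | ck G ψ ih =>
    intro V' M' ht' _ hr
    exact ih hφ (tState_sharedState hs G) ht'
      ((sharedState_mono G hst).trans (sharedState_le_of_reach ht' hr))
      (sat_sharedState_of_sat_ck hs hr.nonempty h)

theorem sat_ck_iff [Finite P] (h : TState owner s.1 s.2) {G : Set P} (hG : G.Nonempty)
    {ψ : Form P A} (hψ : Positive ψ) :
    sat owner (completeH P) (.ck G ψ) s.1 s.2 ↔
      sat owner (completeH P) ψ (sharedState owner G s).1 (sharedState owner G s).2 :=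
  ⟨sat_sharedState_of_sat_ck h hG, fun hψs _ _ ht _ hr =>
    sat_mono hψ (tState_sharedState h G) ht (sharedState_le_of_reach ht hr) hψs⟩

theorem Positive.kw {φ : Form P A} (hφ : Positive φ) : ∀ w : List P, Positive (Kw w φ)
  | [] => hφ
  | _ :: w => hφ.kw w

theorem sat_kw_iff [Finite P] {φ : Form P A} (hφ : Positive φ) (w : List P)
    (h : TState owner s.1 s.2) :
    sat owner (completeH P) (Kw w φ) s.1 s.2 ↔
      sat owner (completeH P) φ (sharedState owner {x | x ∈ w} s).1
        (sharedState owner {x | x ∈ w} s).2 := by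
  induction w generalizing s with
  | nil =>
    rw [setOf_mem_nil, h.sharedState_empty]
    rfl
  | cons i w ih =>
    rw [setOf_mem_cons, ← h.sharedState_sharedState,
      ← ih (tState_sharedState h {i})]
    exact sat_ck_iff h (Set.singleton_nonempty i) (hφ.kw w)

end sharedState

theorem ck_iff_exhaustive_word {P A : Type} [Fintype P] (owner : A → P)
    (V : Set A) (M : Set (Msg P A)) (hS : TState owner V M)
    (G : Set P) (hG : G.Nonempty) (φ : Form P A) (hφ : Positive φ) :
    sat owner (completeH P) (.ck G φ) V M ↔
      ∃ w : List P, {x | x ∈ w} = G ∧ sat owner (completeH P) (Kw w φ) V M := by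
  rw [sat_ck_iff (s := (V, M)) hS hG hφ]
  constructor
  · intro h
    obtain ⟨w, rfl⟩ := exists_list_setOf_mem_eq G
    exact ⟨w, rfl, (sat_kw_iff hφ w (s := (V, M)) hS).2 h⟩
  · rintro ⟨w, rfl, hw⟩
    exact (sat_kw_iff hφ w (s := (V, M)) hS).1 hw
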